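/- Occupancy invariance: for any school choice problem P, any stable-dominating matching ν, and any school s ∈ S, the number of students assigned to s under ν equals the number assigned to s under DA: |ν⁻¹(s)| = |DA⁻¹_s(P)|. -/

import Mathlib

/-!
A school choice problem: finitely many students `I` and schools `S`
(with a distinguished null school of quota `|I|`).  Each student `i` has a
strict preference over schools represented by its rank function
`rk i : S → ℕ` (a bijection onto `{1, …, |S|}`, where rank 1 is the most
preferred school); each school `s` has a quota `quota s ≥ 1` and a strict
priority over students represented by `prio s : I → ℕ`
(`i ▷_s j` iff `prio s i < prio s j`).
-/
structure SchoolChoice (I S : Type) [Fintype I] [Fintype S]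
    [DecidableEq I] [DecidableEq S] where
  nullSchool : S
  quota : S → ℕ
  rk : I → S → ℕ
  prio : S → I → ℕ
  quota_pos : ∀ s : S, 1 ≤ quota s
  quota_null : quota nullSchool = Fintype.card I
  rk_inj : ∀ i : I, Function.Injective (rk i)
  rk_mem : ∀ (i : I) (s : S), rk i s ∈ Finset.Icc 1 (Fintype.card S)
  prio_inj : ∀ s : S, Function.Injective (prio s)

namespace SchoolChoice

open scoped Classical

variable {I S : Type} [Fintype I] [Fintype S] [DecidableEq I] [DecidableEq S]

/-- `μ` is a matching: no school is assigned more students than its quota. -/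
def IsMatching (P : SchoolChoice I S) (μ : I → S) : Prop :=
  ∀ s : S, (Finset.univ.filter fun i => μ i = s).card ≤ P.quota s

/-- Given the sets `R i` of schools that have rejected student `i` so far,
student `i` proposes to her most preferred school that has not rejected her. -/
noncomputable def propose (P : SchoolChoice I S) (R : I → Finset S) (i : I) : S :=
  if h : (Finset.univ \ R i).Nonempty then
    (Finset.exists_min_image (Finset.univ \ R i) (P.rk i) h).choose
  else P.nullSchool

/-- At the DA round with rejection state `R`, school `s` rejects student `i`:
`i` applies to `s` and at least `quota s` applicants to `s` have higher priority. -/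
def rejectsAt (P : SchoolChoice I S) (R : I → Finset S) (s : S) (i : I) : Prop :=
  P.propose R i = s ∧
    P.quota s ≤ (Finset.univ.filter fun j =>
      P.propose R j = s ∧ P.prio s j < P.prio s i).card

/-- One round of student-proposing Deferred Acceptance: record new rejections. -/
noncomputable def stepR (P : SchoolChoice I S) (R : I → Finset S) : I → Finset S :=
  fun i => R i ∪ (Finset.univ.filter fun s => P.rejectsAt R s i)

/-- Rejection state after `n` rounds of Deferred Acceptance. -/
noncomputable def daR (P : SchoolChoice I S) : ℕ → I → Finset S
  | 0 => fun _ => (∅ : Finset S)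
  | n + 1 => P.stepR (P.daR n)

/-- The outcome of the student-proposing Deferred Acceptance algorithm:
iterate rounds until no rejection occurs (which happens within
`|I|·|S| + 1` rounds); each student is matched to the school holding her. -/
noncomputable def DA (P : SchoolChoice I S) : I → S :=
  P.propose (P.daR (Fintype.card I * Fintype.card S + 1))

/-- A matching `ν` is stable-dominating if every student weakly prefers
`ν` to the DA outcome. -/
def StableDominating (P : SchoolChoice I S) (ν : I → S) : Prop :=
  P.IsMatching ν ∧ ∀ i : I, P.rk i (ν i) ≤ P.rk i (P.DA i)

/-- Student `i` is unimprovable: every stable-dominating matching assigns `i`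
to her DA school. -/
def Unimprovable (P : SchoolChoice I S) (i : I) : Prop :=
  ∀ ν : I → S, P.StableDominating ν → ν i = P.DA i

/-- Edge of the envy digraph `G^DA(P)`: `i` prefers `j`'s DA school to her own. -/
def Envy (P : SchoolChoice I S) (i j : I) : Prop :=
  P.rk i (P.DA j) < P.rk i (P.DA i)

/-- Student `i` lies on a directed cycle of the envy digraph `G^DA(P)`. -/
def OnCycle (P : SchoolChoice I S) (i : I) : Prop :=
  ∃ (m : ℕ) (c : ℕ → I), 0 < m ∧ c 0 = i ∧ c m = i ∧
    ∀ k < m, P.Envy (c k) (c (k + 1))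

/-- Student `i` desires school `s` in matching `μ`. -/
def Desires (P : SchoolChoice I S) (μ : I → S) (i : I) (s : S) : Prop :=
  P.rk i s < P.rk i (μ i)

/-- `μ` is non-wasteful: every desired school is filled to quota. -/
def NonWasteful (P : SchoolChoice I S) (μ : I → S) : Prop :=
  ∀ s : S, (∃ i : I, P.Desires μ i s) →
    (Finset.univ.filter fun i => μ i = s).card = P.quota s

/-- `μ` is stable: a non-wasteful matching with no priority violations. -/
def Stable (P : SchoolChoice I S) (μ : I → S) : Prop :=
  P.IsMatching μ ∧ P.NonWasteful μ ∧
    ¬ ∃ (i j : I) (s : S), P.Desires μ i s ∧ μ j = s ∧ P.prio s i < P.prio s j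

/-- `μ` Pareto-dominates `ν`. -/
def ParetoDominates (P : SchoolChoice I S) (μ ν : I → S) : Prop :=
  (∀ i : I, P.rk i (μ i) ≤ P.rk i (ν i)) ∧ ∃ i : I, P.rk i (μ i) < P.rk i (ν i)

/-- `μ` is a Pareto-efficient matching. -/
def ParetoEfficient (P : SchoolChoice I S) (μ : I → S) : Prop :=
  P.IsMatching μ ∧ ∀ ν : I → S, P.IsMatching ν → ¬ P.ParetoDominates ν μ

end SchoolChoice

/-!
If `ν` puts a student `i` at a school `t` other than `DA i`, then `i` prefers `t` to her DA
school, so `t` rejected `i` at some round of DA. A school that rejects has at least `quota t`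
applicants, and it keeps at least `quota t` applicants in every later round, since the `quota t`
best-ranked of them are never rejected. Hence `t` is full under DA and
`#ν⁻¹(t) ≤ quota t ≤ #DA⁻¹(t)`; otherwise `ν⁻¹(t) ⊆ DA⁻¹(t)`. Both families of fibres partition
`I`, so these inequalities are equalities.
-/

open Finset

section Counting

variable {α β : Type*}

theorem card_filter_card_filter_lt_lt [LinearOrder β] (A : Finset α) (f : α → β)
    (hf : Set.InjOn f A) {q : ℕ} (hq : q ≤ #A) :
    #{j ∈ A | #{k ∈ A | f k < f j} < q} = q := by
  set g : α → ℕ := fun j => #{k ∈ A | f k < f j}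
  have hg_lt : ∀ j ∈ A, ∀ j' ∈ A, f j < f j' → g j < g j' := by
    intro j hj j' _ hjj'
    refine card_lt_card ((ssubset_iff_of_subset ?_).2 ⟨j, ?_, ?_⟩)
    · exact monotone_filter_right A fun k _ hk => hk.trans hjj'
    · simp [hj, hjj']
    · simp
  have hg_inj : Set.InjOn g A := fun j hj j' hj' hgg => by
    by_contra hne
    rcases lt_or_gt_of_ne (hf.ne hj hj' hne) with h | h
    · exact (hg_lt j hj j' hj' h).ne hgg
    · exact (hg_lt j' hj' j hj h).ne' hgg
  have hg_range : A.image g = range #A := by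
    refine eq_of_subset_of_card_le (fun n hn => ?_) (by rw [card_range, card_image_of_injOn hg_inj])
    obtain ⟨j, hj, rfl⟩ := mem_image.1 hn
    exact mem_range.2 <| card_lt_card <| (ssubset_iff_of_subset (filter_subset _ _)).2
      ⟨j, hj, by simp⟩
  calc #{j ∈ A | g j < q} = #((A.image g).filter (· < q)) := by
        rw [filter_image, card_image_of_injOn (hg_inj.mono (filter_subset _ _))]
    _ = #(range q) := by
        rw [hg_range]
        congr 1
        ext n
        simp only [mem_filter, mem_range]
        omega
    _ = q := card_range q

theorem card_filter_eq_of_forall_card_filter_le [Fintype α] [DecidableEq β] [Fintype β]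
    (f g : α → β) (h : ∀ b, #{a | f a = b} ≤ #{a | g a = b}) (b : β) :
    #{a | f a = b} = #{a | g a = b} := by
  have hsum : ∑ b, #{a | f a = b} = ∑ b, #{a | g a = b} := by
    rw [← card_eq_sum_card_fiberwise (fun a _ => mem_univ (f a)),
      ← card_eq_sum_card_fiberwise (fun a _ => mem_univ (g a))]
  exact (sum_eq_sum_iff_of_le fun b _ => h b).1 hsum b (mem_univ b)

end Counting

namespace SchoolChoice

variable {I S : Type} [Fintype I] [Fintype S] [DecidableEq I] [DecidableEq S]
  (P : SchoolChoice I S)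

theorem propose_not_mem {R : I → Finset S} {i : I} (h : (univ \ R i).Nonempty) :
    P.propose R i ∉ R i := by
  rw [propose, dif_pos h]
  exact (mem_sdiff.1 (exists_min_image _ (P.rk i) h).choose_spec.1).2

theorem rk_propose_le {R : I → Finset S} {i : I} (h : (univ \ R i).Nonempty) {t : S}
    (ht : t ∉ R i) : P.rk i (P.propose R i) ≤ P.rk i t := by
  rw [propose, dif_pos h]
  exact (exists_min_image _ (P.rk i) h).choose_spec.2 t (mem_sdiff.2 ⟨mem_univ t, ht⟩)

theorem not_rejectsAt_nullSchool (R : I → Finset S) (i : I) :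
    ¬ P.rejectsAt R P.nullSchool i := by
  rintro ⟨-, hq⟩
  have hlt : #{j | P.propose R j = P.nullSchool ∧ P.prio P.nullSchool j < P.prio P.nullSchool i}
      < Fintype.card I :=
    card_lt_univ_of_notMem (x := i) (by simp)
  rw [P.quota_null] at hq
  omega

theorem nullSchool_not_mem_daR (n : ℕ) (i : I) : P.nullSchool ∉ P.daR n i := by
  induction n with
  | zero => simp [daR]
  | succ n ih =>
    simp only [daR, stepR, mem_union, mem_filter, not_or]
    exact ⟨ih, fun h => P.not_rejectsAt_nullSchool _ i h.2⟩

theorem univ_sdiff_daR_nonempty (n : ℕ) (i : I) : (univ \ P.daR n i).Nonempty :=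
  ⟨P.nullSchool, mem_sdiff.2 ⟨mem_univ _, P.nullSchool_not_mem_daR n i⟩⟩

theorem mem_daR_succ_iff {n : ℕ} {i : I} {s : S} :
    s ∈ P.daR (n + 1) i ↔ s ∈ P.daR n i ∨ P.rejectsAt (P.daR n) s i := by
  simp [daR, stepR]

theorem propose_daR_succ {n : ℕ} {j : I} {s : S} (hs : P.propose (P.daR n) j = s)
    (hrej : ¬ P.rejectsAt (P.daR n) s j) : P.propose (P.daR (n + 1)) j = s := by
  have hs_mem : s ∉ P.daR (n + 1) j := by
    rw [mem_daR_succ_iff, not_or]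
    exact ⟨hs ▸ P.propose_not_mem (P.univ_sdiff_daR_nonempty n j), hrej⟩
  have hnew_mem : P.propose (P.daR (n + 1)) j ∉ P.daR n j := fun h =>
    P.propose_not_mem (P.univ_sdiff_daR_nonempty (n + 1) j) (P.mem_daR_succ_iff.2 (.inl h))
  refine P.rk_inj j (le_antisymm ?_ ?_)
  · exact P.rk_propose_le (P.univ_sdiff_daR_nonempty (n + 1) j) hs_mem
  · exact hs ▸ P.rk_propose_le (P.univ_sdiff_daR_nonempty n j) hnew_mem

/-- The `quota s` highest-priority applicants are never rejected, so a school with enough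
applicants keeps enough of them. -/
theorem quota_le_card_propose_daR_succ {s : S} {n : ℕ}
    (h : P.quota s ≤ #{j | P.propose (P.daR n) j = s}) :
    P.quota s ≤ #{j | P.propose (P.daR (n + 1)) j = s} := by
  set A : Finset I := {j | P.propose (P.daR n) j = s}
  have hkept : ∀ j ∈ A, #{k ∈ A | P.prio s k < P.prio s j} < P.quota s →
      P.propose (P.daR (n + 1)) j = s := by
    intro j hj hrank
    refine P.propose_daR_succ (mem_filter.1 hj).2 fun ⟨_, hq⟩ => ?_
    rw [filter_filter] at hrank
    omega
  calc P.quota s = #{j ∈ A | #{k ∈ A | P.prio s k < P.prio s j} < P.quota s} :=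
        (card_filter_card_filter_lt_lt A _ (P.prio_inj s).injOn h).symm
    _ ≤ #{j | P.propose (P.daR (n + 1)) j = s} :=
        card_le_card fun j hj =>
          mem_filter.2 ⟨mem_univ j, hkept j (mem_filter.1 hj).1 (mem_filter.1 hj).2⟩

theorem quota_le_card_propose_daR_of_le {s : S} {n m : ℕ} (hnm : n ≤ m)
    (h : P.quota s ≤ #{j | P.propose (P.daR n) j = s}) :
    P.quota s ≤ #{j | P.propose (P.daR m) j = s} := by
  induction m, hnm using Nat.le_induction with
  | base => exact h
  | succ m _ ih => exact P.quota_le_card_propose_daR_succ ih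

theorem exists_rejectsAt_of_mem_daR {m : ℕ} {i : I} {s : S} (h : s ∈ P.daR m i) :
    ∃ n < m, P.rejectsAt (P.daR n) s i := by
  induction m with
  | zero => simp [daR] at h
  | succ m ih =>
    rcases P.mem_daR_succ_iff.1 h with h | h
    · obtain ⟨n, hn, hrej⟩ := ih h
      exact ⟨n, by omega, hrej⟩
    · exact ⟨m, by omega, h⟩

theorem quota_le_card_DA_of_rk_lt {i : I} {s : S} (h : P.rk i s < P.rk i (P.DA i)) :
    P.quota s ≤ #{j | P.DA j = s} := by
  set N := Fintype.card I * Fintype.card S + 1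
  have hs_mem : s ∈ P.daR N i := by
    by_contra hs
    exact (P.rk_propose_le (P.univ_sdiff_daR_nonempty N i) hs).not_gt h
  obtain ⟨n, hn, -, hq⟩ := P.exists_rejectsAt_of_mem_daR hs_mem
  exact P.quota_le_card_propose_daR_of_le hn.le
    (hq.trans (card_le_card (monotone_filter_right _ fun _ _ hj => hj.1)))

variable {P} in
theorem StableDominating.card_filter_le_card_filter_DA {ν : I → S} (hν : P.StableDominating ν)
    (t : S) : #{i | ν i = t} ≤ #{i | P.DA i = t} := by
  by_cases h : ∃ i, ν i = t ∧ P.DA i ≠ t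
  · obtain ⟨i, rfl, hne⟩ := h
    have hlt : P.rk i (ν i) < P.rk i (P.DA i) :=
      (hν.2 i).lt_of_ne fun heq => hne (P.rk_inj i heq).symm
    exact (hν.1 (ν i)).trans (P.quota_le_card_DA_of_rk_lt hlt)
  · push Not at h
    exact card_le_card (monotone_filter_right _ fun j _ hj => h j hj)

end SchoolChoice

/-- Occupancy invariance: for any school choice problem `P`, any
stable-dominating matching `ν` and any school `s`, the number of students
assigned to `s` under `ν` equals the number assigned to `s` under DA. -/
theorem occupancy_invariance {I S : Type} [Fintype I] [Fintype S]
    [DecidableEq I] [DecidableEq S] (P : SchoolChoice I S) (ν : I → S)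
    (hν : P.StableDominating ν) (s : S) :
    (Finset.univ.filter fun i => ν i = s).card
      = (Finset.univ.filter fun i => P.DA i = s).card :=
  card_filter_eq_of_forall_card_filter_le ν P.DA hν.card_filter_le_card_filter_DA s
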